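/- Let n ≥ 2 and let σ be a permutation of Fin n that is a single n-cycle (the selected train connection arcs form one closed loop circuit through all n train nodes). Then there exists a function u : Fin n → ℤ with 0 ≤ u(i) ≤ n − 1 for every i, such that for all i, j with i ≠ j and j ≠ 0 one has u(i) − u(j) + n·(if σ(i) = j then 1 else 0) ≤ n − 1; that is, the Miller–Tucker–Zemlin subtour-elimination constraints with node 0 as the depot node are satisfiable by assigning to each train its position number along the circuit starting from node 0. -/
import Mathlib


/-- If the permutation `σ` encoding the selected train connection
arcs is a single `n`-cycle, then the Miller–Tucker–Zemlin subtour-elimination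
constraints (with node 0 as the depot node) are satisfiable by some
position-number function `u`. -/
theorem single_cycle_implies_mtz (n : ℕ) (hn : 2 ≤ n) (σ : Equiv.Perm (Fin n))
    (hσ : σ.IsCycle ∧ σ.support = Finset.univ) :
    ∃ u : Fin n → ℤ,
      (∀ i : Fin n, 0 ≤ u i ∧ u i ≤ (n : ℤ) - 1) ∧
      (∀ i j : Fin n, i ≠ j → (j : ℕ) ≠ 0 →
        u i - u j + (n : ℤ) * (if σ i = j then 1 else 0) ≤ (n : ℤ) - 1) := by
  obtain ⟨hc, hs⟩ := hσ
  have hnpos : 0 < n := by omega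
  set z : Fin n := ⟨0, hnpos⟩ with hz
  have z0 : z ∈ σ.support := by rw [hs]; exact Finset.mem_univ _
  have hcard : σ.support.card = n := by rw [hs, Finset.card_univ, Fintype.card_fin]
  have hco : σ.IsCycleOn (σ.support : Set (Fin n)) := by
    rw [Equiv.Perm.coe_support_eq_set_support]
    exact hc.isCycleOn
  have key : ∀ k : ℕ, (σ ^ k) z = z ↔ n ∣ k := by
    intro k
    rw [hco.pow_apply_eq z0, hcard]
  have main : ∀ a b : Fin n, (a : ℕ) ≤ (b : ℕ) →
      (σ ^ (a : ℕ)) z = (σ ^ (b : ℕ)) z → a = b := by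
    intro a b hle hab
    have hfix : (σ ^ ((b : ℕ) - (a : ℕ))) z = z := by
      have h2 : (σ ^ (a : ℕ)) ((σ ^ ((b : ℕ) - (a : ℕ))) z) = (σ ^ (a : ℕ)) z := by
        rw [← Equiv.Perm.mul_apply, ← pow_add, Nat.add_sub_cancel' hle]
        exact hab.symm
      exact (σ ^ (a : ℕ)).injective h2
    rw [key] at hfix
    have hb := b.isLt
    have heq : (b : ℕ) - (a : ℕ) = 0 := by
      rcases hfix with ⟨c, hc'⟩
      rcases c with _ | c
      · omega
      · exfalso
        have : n ≤ n * (c + 1) := Nat.le_mul_of_pos_right _ (by omega)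
        omega
    exact Fin.ext (by omega)
  have finj : Function.Injective (fun k : Fin n => (σ ^ (k : ℕ)) z) := by
    intro a b hab
    simp only at hab
    rcases le_total (a : ℕ) (b : ℕ) with h | h
    · exact main a b h hab
    · exact (main b a h hab.symm).symm
  let e := Equiv.ofBijective _ (Finite.injective_iff_bijective.mp finj)
  have he : ∀ k : Fin n, (σ ^ (k : ℕ)) z = e k := fun k => rfl
  refine ⟨fun i => ((e.symm i : Fin n) : ℕ), fun i => ⟨by positivity, ?_⟩, ?_⟩
  · show ((e.symm i : Fin n) : ℤ) ≤ (n : ℤ) - 1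
    have := (e.symm i).isLt
    omega
  · intro i j hij hj0
    by_cases hsij : σ i = j
    · simp only [hsij, if_pos rfl, mul_one]
      set k := e.symm i with hk
      have hki : (σ ^ (k : ℕ)) z = i := by rw [he]; simp [hk]
      have h1 : (σ ^ ((k : ℕ) + 1)) z = j := by
        rw [pow_succ', Equiv.Perm.mul_apply, hki, hsij]
      have hkn : (k : ℕ) + 1 < n := by
        rcases Nat.lt_or_ge ((k : ℕ) + 1) n with h | h
        · exact h
        · exfalso
          have := k.isLt
          have hkeq : (k : ℕ) + 1 = n := by omega
          rw [hkeq, (key n).mpr dvd_rfl] at h1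
          exact hj0 (by rw [← h1])
      have hej : e.symm j = ⟨(k : ℕ) + 1, hkn⟩ := by
        apply e.symm_apply_eq.mpr
        rw [← he]
        exact h1.symm
      rw [hej]
      push_cast
      omega
    · simp only [if_neg hsij, mul_zero, add_zero]
      have h1 := (e.symm i).isLt
      have h2 : (0 : ℕ) ≤ ((e.symm j : Fin n) : ℕ) := Nat.zero_le _
      omega
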